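/- arXiv:2501.17951 — 3 statements merged into one kernel-verified Lean document; each statement's English description precedes it below -/
import Mathlib

section
/- Let G=(V,E,w) be a simple weighted digraph with adjacency matrix W (W_{u,v}=w(u,v)), degree matrix D, and let M = iW − iW^⊤ where i is the imaginary unit. Then for every x ∈ ℂ^V, x*(D − M)x = Σ_{(u,v)∈E} w(u,v)·|x_u − i·x_v|², and consequently x*(D − M)x = 0 if and only if x_u = i·x_v for every edge (u,v) ∈ E. -/
open Finset Matrix

/-- Let `G = (V, E, w)` be a simple weighted digraph with adjacency matrix
`W` (`W u v = w u v`), degree matrix `D`, and let `M = i • W - i • Wᵀ` (as a complex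
matrix).  Then for every `x : V → ℂ`,
`x* (D - M) x = ∑_{(u,v) ∈ E} w u v * |x u - i * x v|²`, and consequently
`x* (D - M) x = 0` if and only if `x u = i * x v` for every edge `(u, v) ∈ E`. -/
theorem stmt_3 {V : Type*} [Fintype V] [DecidableEq V]
    (w : V → V → ℝ) (hw : ∀ u v, 0 ≤ w u v)
    (hloop : ∀ u, w u u = 0)
    (hsimple : ∀ u v, ¬(0 < w u v ∧ 0 < w v u))
    (W : Matrix V V ℝ) (hW : ∀ u v, W u v = w u v)
    (M : Matrix V V ℂ)
    (hM : M = Complex.I • (W.map Complex.ofReal) - Complex.I • (W.map Complex.ofReal)ᵀ)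
    (D : Matrix V V ℂ)
    (hD : D = Matrix.diagonal fun u => ((∑ v, (w u v + w v u) : ℝ) : ℂ))
    (x : V → ℂ) :
    (dotProduct (star x) ((D - M).mulVec x) =
      ∑ u, ∑ v, if 0 < w u v then
        ((w u v * ‖x u - Complex.I * x v‖ ^ 2 : ℝ) : ℂ)
      else 0) ∧
    (dotProduct (star x) ((D - M).mulVec x) = 0 ↔
      ∀ u v, 0 < w u v → x u = Complex.I * x v) := by
  have hmain : dotProduct (star x) ((D - M).mulVec x) =
      ∑ u, ∑ v, if 0 < w u v then
        ((w u v * ‖x u - Complex.I * x v‖ ^ 2 : ℝ) : ℂ)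
      else 0 := by
    have hterm : ∀ u v : V, (if 0 < w u v then
          ((w u v * ‖x u - Complex.I * x v‖ ^ 2 : ℝ) : ℂ) else 0)
        = (w u v : ℂ) * ((x u - Complex.I * x v) *
            (starRingEnd ℂ) (x u - Complex.I * x v)) := by
      intro u v
      have habs : ((‖x u - Complex.I * x v‖ ^ 2 : ℝ) : ℂ)
          = (x u - Complex.I * x v) * (starRingEnd ℂ) (x u - Complex.I * x v) := by
        rw [Complex.sq_norm, ← Complex.mul_conj]
      by_cases h : 0 < w u v
      · rw [if_pos h, Complex.ofReal_mul, habs]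
      · have h0 : w u v = 0 := le_antisymm (not_lt.mp h) (hw u v)
        rw [if_neg h, h0]
        simp
    have hS : dotProduct (star x) ((D - M).mulVec x)
        = (∑ u, ∑ v, ((w u v : ℂ) + (w v u : ℂ)) * ((starRingEnd ℂ) (x u) * x u))
          - ∑ u, ∑ v, (starRingEnd ℂ) (x u) *
              ((Complex.I * (w u v : ℂ) - Complex.I * (w v u : ℂ)) * x v) := by
      rw [hM, hD, Matrix.sub_mulVec, dotProduct_sub]
      congr 1
      · simp only [dotProduct, Matrix.mulVec_diagonal, Pi.star_apply, RCLike.star_def]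
        refine Finset.sum_congr rfl fun u _ => ?_
        push_cast
        rw [Finset.sum_mul, Finset.mul_sum]
        refine Finset.sum_congr rfl fun v _ => ?_
        ring
      · simp only [dotProduct, Matrix.mulVec, Pi.star_apply, RCLike.star_def,
          Matrix.sub_apply, Matrix.smul_apply, Matrix.map_apply, Matrix.transpose_apply,
          smul_eq_mul, hW, Finset.mul_sum]
    have swap1 : ∑ u, ∑ v, ((w v u : ℂ)) * ((starRingEnd ℂ) (x u) * x u)
        = ∑ u, ∑ v, ((w u v : ℂ)) * ((starRingEnd ℂ) (x v) * x v) := Finset.sum_comm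
    have swap2 : ∑ u, ∑ v, (starRingEnd ℂ) (x u) * (Complex.I * (w v u : ℂ) * x v)
        = ∑ u, ∑ v, (starRingEnd ℂ) (x v) * (Complex.I * (w u v : ℂ) * x u) :=
      Finset.sum_comm
    rw [hS]
    have expand1 : ∀ u v : V, ((w u v : ℂ) + (w v u : ℂ)) * ((starRingEnd ℂ) (x u) * x u)
        = (w u v : ℂ) * ((starRingEnd ℂ) (x u) * x u)
          + (w v u : ℂ) * ((starRingEnd ℂ) (x u) * x u) := fun u v => by ring
    have expand2 : ∀ u v : V, (starRingEnd ℂ) (x u) *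
          ((Complex.I * (w u v : ℂ) - Complex.I * (w v u : ℂ)) * x v)
        = (starRingEnd ℂ) (x u) * (Complex.I * (w u v : ℂ) * x v)
          - (starRingEnd ℂ) (x u) * (Complex.I * (w v u : ℂ) * x v) := fun u v => by ring
    simp only [expand1, expand2, Finset.sum_add_distrib, Finset.sum_sub_distrib]
    rw [swap1, swap2]
    simp only [hterm]
    have split : ∀ u v : V, (w u v : ℂ) * ((x u - Complex.I * x v) *
          (starRingEnd ℂ) (x u - Complex.I * x v))
        = (w u v : ℂ) * ((starRingEnd ℂ) (x u) * x u)
          + (w u v : ℂ) * ((starRingEnd ℂ) (x v) * x v)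
          - ((starRingEnd ℂ) (x u) * (Complex.I * (w u v : ℂ) * x v)
              - (starRingEnd ℂ) (x v) * (Complex.I * (w u v : ℂ) * x u)) := by
      intro u v
      simp only [map_sub, _root_.map_mul, Complex.conj_I]
      linear_combination -(w u v : ℂ) * x v * (starRingEnd ℂ) (x v) * Complex.I_mul_I
    simp only [split, Finset.sum_add_distrib, Finset.sum_sub_distrib]
  refine ⟨hmain, ?_⟩
  rw [hmain]
  have hcast : (∑ u, ∑ v, if 0 < w u v then
        ((w u v * ‖x u - Complex.I * x v‖ ^ 2 : ℝ) : ℂ) else 0)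
      = ((∑ u, ∑ v, if 0 < w u v then
          (w u v * ‖x u - Complex.I * x v‖ ^ 2) else 0 : ℝ) : ℂ) := by
    simp only [Complex.ofReal_sum, apply_ite Complex.ofReal, Complex.ofReal_zero]
  rw [hcast, Complex.ofReal_eq_zero]
  have hnn : ∀ u ∈ (univ : Finset V), ∀ v ∈ (univ : Finset V),
      (0 : ℝ) ≤ if 0 < w u v then w u v * ‖x u - Complex.I * x v‖ ^ 2 else 0 := by
    intro u _ v _
    split
    · positivity
    · exact le_refl _
  have hzero : (∑ u, ∑ v, if 0 < w u v then
        w u v * ‖x u - Complex.I * x v‖ ^ 2 else 0) = 0 ↔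
      ∀ u ∈ (univ : Finset V), ∀ v ∈ (univ : Finset V),
        (if 0 < w u v then w u v * ‖x u - Complex.I * x v‖ ^ 2 else 0) = 0 := by
    rw [Finset.sum_eq_zero_iff_of_nonneg fun u hu =>
      Finset.sum_nonneg (fun v hv => hnn u hu v hv)]
    constructor
    · intro h u hu v hv
      have := h u hu
      exact (Finset.sum_eq_zero_iff_of_nonneg (fun v hv => hnn u hu v hv)).mp this v hv
    · intro h u hu
      exact Finset.sum_eq_zero fun v hv => h u hu v hv
  rw [hzero]
  constructor
  · intro h u v huv
    have h1 := h u (mem_univ u) v (mem_univ v)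
    rw [if_pos huv] at h1
    have h2 : ‖x u - Complex.I * x v‖ ^ 2 = 0 := by
      rcases mul_eq_zero.mp h1 with h | h
      · exact absurd h (ne_of_gt huv)
      · exact h
    have h3 : x u - Complex.I * x v = 0 := by
      have := pow_eq_zero_iff (n := 2) (by norm_num) |>.mp h2
      exact norm_eq_zero.mp this
    exact sub_eq_zero.mp h3
  · intro h u _ v _
    split
    · next huv =>
      rw [h u v huv, sub_self]
      simp
    · rfl
end

section
/- Let G=(V,E,w) be a simple weighted digraph, let 𝒮 = {S_0,…,S_{k−1}} be a clustering of G, and let M^𝒮 be the Hermitian matrix representation of G associated with 𝒮, with Laplacian L(M^𝒮) = D − M^𝒮. Suppose that each cluster S_i is weakly connected in G and that the meta-graph of 𝒮 is weakly connected. If 0 is an eigenvalue of L(M^𝒮), then 𝒮 is a perfect clustering. -/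
open Finset Matrix

/-- Let `G = (V, E, w)` be a simple weighted digraph, let
`𝒮 = {S_0, …, S_{k-1}}` be a clustering of `G` (encoded by `σ : V → Fin k` with every
cluster nonempty), and let `M^𝒮` be the Hermitian matrix representation of `G` associated
with `𝒮` (the seven cases of equation (2) of the paper, encoded in `hM`), with Laplacian
`L(M^𝒮) = D - M^𝒮`.  Suppose each cluster `S_i` is weakly connected in `G` and the
meta-graph of `𝒮` is weakly connected.  If `0` is an eigenvalue of `L(M^𝒮)`, then `𝒮`
is a perfect clustering. -/
theorem stmt_10 {V : Type*} [Fintype V] [DecidableEq V]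
    (w : V → V → ℝ) (hw : ∀ u v, 0 ≤ w u v)
    (hloop : ∀ u, w u u = 0)
    (hsimple : ∀ u v, ¬(0 < w u v ∧ 0 < w v u))
    (k : ℕ) (hk : 2 ≤ k)
    (σ : V → Fin k) (hσ : ∀ i : Fin k, ∃ u, σ u = i)
    (Em : Fin k → Fin k → Prop)
    (hEm : ∀ i j : Fin k, Em i j ↔
      (∑ u, ∑ v, if σ u = j ∧ σ v = i then w u v else 0) <
      (∑ u, ∑ v, if σ u = i ∧ σ v = j then w u v else 0))
    (ω : ℂ) (hω : ω = Complex.exp (2 * Real.pi * Complex.I / k))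
    (M : Matrix V V ℂ)
    (hM : ∀ u v : V,
      (0 < w u v → Em (σ u) (σ v) →
        M u v = (w u v : ℂ) * ω ^ ((σ u : ℤ) - (σ v : ℤ))) ∧
      (0 < w v u → Em (σ u) (σ v) →
        M u v = (w v u : ℂ) * ω ^ ((σ v : ℤ) - (σ u : ℤ))) ∧
      (0 < w u v → ¬ Em (σ u) (σ v) → σ u ≠ σ v →
        M u v = (w u v : ℂ) * ω ^ ((σ u : ℤ) - (σ v : ℤ)) *
          Complex.exp (Real.pi * Complex.I / 3)) ∧
      (0 < w v u → ¬ Em (σ u) (σ v) → σ u ≠ σ v →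
        M u v = (w v u : ℂ) * ω ^ ((σ v : ℤ) - (σ u : ℤ)) *
          Complex.exp (-(Real.pi * Complex.I) / 3)) ∧
      (0 < w u v → σ u = σ v → M u v = (w u v : ℂ)) ∧
      (0 < w v u → σ u = σ v → M u v = (w v u : ℂ)) ∧
      (¬ 0 < w u v → ¬ 0 < w v u → M u v = 0))
    (D : Matrix V V ℂ)
    (hD : D = Matrix.diagonal fun u => ((∑ v, (w u v + w v u) : ℝ) : ℂ))
    -- each cluster is weakly connected in `G`:
    (hclconn : ∀ i : Fin k, ∀ a b : V, σ a = i → σ b = i →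
      Relation.ReflTransGen
        (fun p q : V => σ p = i ∧ σ q = i ∧ (0 < w p q ∨ 0 < w q p)) a b)
    -- the meta-graph is weakly connected:
    (hmetaconn : ∀ i j : Fin k,
      Relation.ReflTransGen (fun p q : Fin k => Em p q ∨ Em q p) i j)
    -- `0` is an eigenvalue of `L(M^𝒮) = D - M^𝒮`:
    (hzero : ∃ x : V → ℂ, x ≠ 0 ∧ (D - M).mulVec x = 0) :
    ∀ u v, 0 < w u v → σ u ≠ σ v → Em (σ u) (σ v) := by
    classical
  obtain ⟨x, hx0, hxL⟩ := hzero
  have hk0 : 0 < k := by omega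
  have hπ : (0:ℝ) < Real.pi := Real.pi_pos
  have hωne : ω ≠ 0 := by rw [hω]; exact Complex.exp_ne_zero _
  have hωabs : norm ω = 1 := by
    rw [hω, Complex.norm_exp]
    have h1 : (2 * (Real.pi:ℂ) * Complex.I / (k:ℂ)).re = 0 := by
      simp [Complex.div_re]
    rw [show (2 * (Real.pi:ℝ) * Complex.I / (k:ℂ)) = (2 * (Real.pi:ℂ) * Complex.I / (k:ℂ)) by push_cast; ring,
      h1, Real.exp_zero]
  have hωzabs : ∀ n : ℤ, norm (ω ^ n) = 1 := by
    intro n; rw [norm_zpow, hωabs, _root_.one_zpow]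
  have hexp3 : norm (Complex.exp ((Real.pi:ℝ) * Complex.I / 3)) = 1 := by
    rw [Complex.norm_exp]
    have h1 : ((Real.pi:ℂ) * Complex.I / 3).re = 0 := by simp [Complex.div_re]
    rw [h1, Real.exp_zero]
  have hexp3' : norm (Complex.exp (-((Real.pi:ℝ) * Complex.I) / 3)) = 1 := by
    rw [Complex.norm_exp]
    have h1 : (-((Real.pi:ℂ) * Complex.I) / 3).re = 0 := by simp [Complex.div_re]
    rw [h1, Real.exp_zero]
  have hopp : ∀ p q, 0 < w p q → w q p = 0 := by
    intro p q h
    rcases lt_or_eq_of_le (hw q p) with h' | h'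
    · exact absurd ⟨h, h'⟩ (hsimple p q)
    · exact h'.symm
  have habs : ∀ p q, norm (M p q) = w p q + w q p := by
    intro p q
    obtain ⟨h1, h2, h3, h4, h5, h6, h7⟩ := hM p q
    rcases lt_or_eq_of_le (hw p q) with hpq | hpq
    · have hqp : w q p = 0 := hopp p q hpq
      rw [hqp, add_zero]
      by_cases hs : σ p = σ q
      · rw [h5 hpq hs, Complex.norm_real, Real.norm_eq_abs, abs_of_pos hpq]
      · by_cases he : Em (σ p) (σ q)
        · rw [h1 hpq he, norm_mul, hωzabs, mul_one, Complex.norm_real, Real.norm_eq_abs, abs_of_pos hpq]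
        · rw [h3 hpq he hs, norm_mul, norm_mul, hωzabs, hexp3, mul_one, mul_one,
            Complex.norm_real, Real.norm_eq_abs, abs_of_pos hpq]
    · rcases lt_or_eq_of_le (hw q p) with hqp | hqp
      · rw [← hpq, zero_add]
        by_cases hs : σ p = σ q
        · rw [h6 hqp hs, Complex.norm_real, Real.norm_eq_abs, abs_of_pos hqp]
        · by_cases he : Em (σ p) (σ q)
          · rw [h2 hqp he, norm_mul, hωzabs, mul_one, Complex.norm_real, Real.norm_eq_abs, abs_of_pos hqp]
          · rw [h4 hqp he hs, norm_mul, norm_mul, hωzabs, hexp3', mul_one, mul_one,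
              Complex.norm_real, Real.norm_eq_abs, abs_of_pos hqp]
      · rw [h7 (by rw [← hpq]; exact lt_irrefl 0) (by rw [← hqp]; exact lt_irrefl 0)]
        rw [← hpq, ← hqp]; simp
  have hMnz : ∀ p q, (0 < w p q ∨ 0 < w q p) → M p q ≠ 0 := by
    intro p q h hMz
    have habs' := habs p q
    rw [hMz, norm_zero] at habs'
    rcases h with h | h
    · have := add_pos_of_pos_of_nonneg h (hw q p); linarith
    · have := add_pos_of_nonneg_of_pos (hw p q) h; linarith
  have hrow : ∀ p, ((∑ v, (w p v + w v p) : ℝ) : ℂ) * x p = ∑ q, M p q * x q := by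
    intro p
    have h := congrFun hxL p
    rw [Matrix.sub_mulVec] at h
    have h' : (D *ᵥ x) p - (M *ᵥ x) p = 0 := h
    rw [hD, Matrix.mulVec_diagonal] at h'
    have h'' : (M *ᵥ x) p = ∑ q, M p q * x q := rfl
    rw [h''] at h'
    linear_combination h'
  have hd_eq : ∀ p, (∑ v, (w p v + w v p) : ℝ) = ∑ q, norm (M p q) :=
    fun p => Finset.sum_congr rfl (fun q _ => (habs p q).symm)
  -- key local lemma at a maximizer
  have key : ∀ p, (∀ r, norm (x r) ≤ norm (x p)) → 0 < norm (x p) →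
      ∀ q, M p q ≠ 0 →
      norm (x q) = norm (x p) ∧
      M p q * x q = ((norm (M p q) : ℝ) : ℂ) * x p := by
    intro p hpmax hppos q hMq
    have hxpne : x p ≠ 0 := fun h => by rw [h, norm_zero] at hppos; exact lt_irrefl 0 hppos
    have hC : ∑ q, (starRingEnd ℂ) (x p) *
        (((norm (M p q) : ℝ) : ℂ) * x p - M p q * x q) = 0 := by
      rw [← Finset.mul_sum, Finset.sum_sub_distrib, ← Finset.sum_mul]
      have hs : (∑ q, ((norm (M p q) : ℝ) : ℂ)) = ((∑ v, (w p v + w v p) : ℝ) : ℂ) := by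
        rw [hd_eq p]; push_cast; rfl
      rw [hs, hrow p, sub_self, mul_zero]
    have hRe : ∑ q, ((starRingEnd ℂ) (x p) *
        (((norm (M p q) : ℝ) : ℂ) * x p - M p q * x q)).re = 0 := by
      rw [← Complex.re_sum, hC, Complex.zero_re]
    have hterm_eq : ∀ q, ((starRingEnd ℂ) (x p) *
        (((norm (M p q) : ℝ) : ℂ) * x p - M p q * x q)).re
        = norm (M p q) * Complex.normSq (x p)
          - ((starRingEnd ℂ) (x p) * (M p q * x q)).re := by
      intro q
      have e1 : (starRingEnd ℂ) (x p) *
          (((norm (M p q) : ℝ) : ℂ) * x p - M p q * x q)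
          = ((norm (M p q) * Complex.normSq (x p) : ℝ) : ℂ)
            - (starRingEnd ℂ) (x p) * (M p q * x q) := by
        push_cast
        rw [← Complex.mul_conj]
        ring
      rw [e1, Complex.sub_re, Complex.ofReal_re]
    have hbound : ∀ q, ((starRingEnd ℂ) (x p) * (M p q * x q)).re
        ≤ norm (M p q) * Complex.normSq (x p) := by
      intro q
      calc ((starRingEnd ℂ) (x p) * (M p q * x q)).re
          ≤ norm ((starRingEnd ℂ) (x p) * (M p q * x q)) := Complex.re_le_norm _
        _ = norm (x p) * (norm (M p q) * norm (x q)) := by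
            rw [norm_mul, norm_mul, Complex.norm_conj]
        _ ≤ norm (x p) * (norm (M p q) * norm (x p)) := by
            apply mul_le_mul_of_nonneg_left _ (norm_nonneg _)
            exact mul_le_mul_of_nonneg_left (hpmax q) (norm_nonneg _)
        _ = norm (M p q) * Complex.normSq (x p) := by
            rw [Complex.normSq_eq_norm_sq]; ring
    have hzero_terms : ∀ q ∈ Finset.univ, ((starRingEnd ℂ) (x p) *
        (((norm (M p q) : ℝ) : ℂ) * x p - M p q * x q)).re = 0 := by
      rw [← Finset.sum_eq_zero_iff_of_nonneg]
      · exact hRe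
      · intro q _
        rw [hterm_eq q]
        have := hbound q; linarith
    have hre_eq : ((starRingEnd ℂ) (x p) * (M p q * x q)).re
        = norm (M p q) * Complex.normSq (x p) := by
      have h0 := hzero_terms q (Finset.mem_univ q)
      rw [hterm_eq q] at h0; linarith
    have hMabs_pos : 0 < norm (M p q) := norm_pos_iff.mpr hMq
    have hle : norm (M p q) * Complex.normSq (x p)
        ≤ norm (x p) * (norm (M p q) * norm (x q)) := by
      calc norm (M p q) * Complex.normSq (x p)
          = ((starRingEnd ℂ) (x p) * (M p q * x q)).re := hre_eq.symm
        _ ≤ norm ((starRingEnd ℂ) (x p) * (M p q * x q)) := Complex.re_le_norm _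
        _ = norm (x p) * (norm (M p q) * norm (x q)) := by
            rw [norm_mul, norm_mul, Complex.norm_conj]
    have hqx : norm (x q) = norm (x p) := by
      have hns : Complex.normSq (x p) = norm (x p) ^ 2 := Complex.normSq_eq_norm_sq _
      rw [hns] at hle
      have : norm (x p) ≤ norm (x q) := by nlinarith [mul_pos hMabs_pos hppos]
      exact le_antisymm (hpmax q) this
    have habsz : norm ((starRingEnd ℂ) (x p) * (M p q * x q))
        = norm (M p q) * Complex.normSq (x p) := by
      rw [norm_mul, norm_mul, Complex.norm_conj, hqx, Complex.normSq_eq_norm_sq]; ring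
    set z := (starRingEnd ℂ) (x p) * (M p q * x q) with hz
    have hre_abs : z.re = norm z := by rw [habsz, hre_eq]
    have him : z.im = 0 := by
      have h1 : norm z ^ 2 = z.re ^ 2 + z.im ^ 2 := by
        rw [Complex.sq_norm, Complex.normSq_apply]; ring
      rw [← hre_abs] at h1
      have h2 : z.im ^ 2 = 0 := by linarith
      exact pow_eq_zero_iff two_ne_zero |>.mp h2
    have hzeq : z = ((norm (M p q) * Complex.normSq (x p) : ℝ) : ℂ) := by
      apply Complex.ext
      · rw [Complex.ofReal_re]
        rw [hz] at hre_eq ⊢; exact hre_eq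
      · rw [him, Complex.ofReal_im]
    refine ⟨hqx, ?_⟩
    have hnsne : ((Complex.normSq (x p) : ℝ) : ℂ) ≠ 0 := by
      exact_mod_cast fun h => hxpne (Complex.normSq_eq_zero.mp h)
    apply mul_left_cancel₀ hnsne
    calc ((Complex.normSq (x p) : ℝ) : ℂ) * (M p q * x q)
        = x p * z := by rw [hz, ← Complex.mul_conj]; ring
      _ = x p * ((norm (M p q) * Complex.normSq (x p) : ℝ) : ℂ) := by rw [hzeq]
      _ = ((Complex.normSq (x p) : ℝ) : ℂ) * (((norm (M p q) : ℝ) : ℂ) * x p) := by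
          push_cast; ring
  -- maximizer
  have hV : Nonempty V := ⟨(hσ ⟨0, hk0⟩).choose⟩
  obtain ⟨u₀, -, hu₀⟩ := Finset.exists_max_image Finset.univ (fun p => norm (x p))
    ⟨Classical.arbitrary V, Finset.mem_univ _⟩
  have hu₀' : ∀ r, norm (x r) ≤ norm (x u₀) := fun r => hu₀ r (Finset.mem_univ r)
  have hc_pos : 0 < norm (x u₀) := by
    rcases lt_or_eq_of_le (norm_nonneg (x u₀)) with h | h
    · exact h
    · exfalso; apply hx0; funext r
      have h1 : norm (x r) ≤ 0 := le_trans (hu₀' r) h.symm.le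
      have h2 : norm (x r) = 0 := le_antisymm h1 (norm_nonneg _)
      simpa using norm_eq_zero.mp h2
  -- witnesses for meta edges
  have hwit : ∀ i j : Fin k, Em i j → ∃ a a', σ a = i ∧ σ a' = j ∧ 0 < w a a' := by
    intro i j hij
    by_contra hcon; push_neg at hcon
    have hz1 : (∑ u, ∑ v, if σ u = i ∧ σ v = j then w u v else 0) = 0 := by
      apply Finset.sum_eq_zero; intro u _; apply Finset.sum_eq_zero; intro v _
      by_cases hc : σ u = i ∧ σ v = j
      · simp only [hc, and_self, if_true]
        have h1 := hcon u v hc.1 hc.2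
        exact le_antisymm h1 (hw u v)
      · simp [hc]
    have h2 := (hEm i j).mp hij
    rw [hz1] at h2
    have hnn : 0 ≤ ∑ u, ∑ v, if σ u = j ∧ σ v = i then w u v else 0 := by
      apply Finset.sum_nonneg; intro u _; apply Finset.sum_nonneg; intro v _
      split
      · exact hw _ _
      · exact le_refl 0
    linarith
  -- reachability
  have hreach : ∀ p q : V, Relation.ReflTransGen (fun p q => 0 < w p q ∨ 0 < w q p) p q := by
    have main : ∀ i j : Fin k, Relation.ReflTransGen (fun a b => Em a b ∨ Em b a) i j →
        ∀ p q : V, σ p = i → σ q = j →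
        Relation.ReflTransGen (fun p q => 0 < w p q ∨ 0 < w q p) p q := by
      intro i j h
      induction h with
      | refl =>
        intro p q hp hq
        exact Relation.ReflTransGen.mono (fun a b (hab : σ a = i ∧ σ b = i ∧ (0 < w a b ∨ 0 < w b a)) => hab.2.2) _ _ (hclconn i p q hp hq)
      | @tail b c hib hbc ih =>
        intro p q hp hq
        obtain ⟨a, a', ha, ha', haa'⟩ :
            ∃ a a', σ a = b ∧ σ a' = c ∧ (0 < w a a' ∨ 0 < w a' a) := by
          rcases hbc with h | h
          · obtain ⟨a, a', h1, h2, h3⟩ := hwit _ _ h; exact ⟨a, a', h1, h2, Or.inl h3⟩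
          · obtain ⟨a, a', h1, h2, h3⟩ := hwit _ _ h; exact ⟨a', a, h2, h1, Or.inr h3⟩
        refine Relation.ReflTransGen.trans (ih p a hp ha) ?_
        refine Relation.ReflTransGen.trans (Relation.ReflTransGen.single haa') ?_
        exact Relation.ReflTransGen.mono (fun a b (hab : σ a = c ∧ σ b = c ∧ (0 < w a b ∨ 0 < w b a)) => hab.2.2) _ _ (hclconn c a' q ha' hq)
    intro p q
    exact main _ _ (hmetaconn (σ p) (σ q)) p q rfl rfl
  -- every vertex is a maximizer
  have hmaxall : ∀ p, ∀ r, norm (x r) ≤ norm (x p) := by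
    intro p
    have h := hreach u₀ p
    induction h with
    | refl => exact hu₀'
    | @tail b c hub hbc ih =>
      intro r
      have hk' := key b ih (lt_of_lt_of_le hc_pos (ih u₀)) c (hMnz _ _ hbc)
      rw [hk'.1]; exact ih r
  have hxall_pos : ∀ p, x p ≠ 0 := by
    intro p h
    have h1 := hmaxall p u₀
    rw [h, norm_zero] at h1; linarith
  have hrel : ∀ p q, M p q ≠ 0 → M p q * x q = ((norm (M p q) : ℝ) : ℂ) * x p :=
    fun p q h => (key p (hmaxall p) (lt_of_lt_of_le hc_pos (hmaxall p u₀)) q h).2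
  -- cluster constancy
  have hcl0 : ∀ i : Fin k, ∀ p q : V,
      Relation.ReflTransGen (fun a b => σ a = i ∧ σ b = i ∧ (0 < w a b ∨ 0 < w b a)) p q →
      x p = x q := by
    intro i p q h
    induction h with
    | refl => rfl
    | @tail b c hpb hbc ih =>
      obtain ⟨hb, hc, hadj⟩ := hbc
      have hbc_eq : σ b = σ c := hb.trans hc.symm
      have hM' := hMnz _ _ hadj
      have hr := hrel _ _ hM'
      obtain ⟨hM1, hM2, hM3, hM4, hM5, hM6, hM7⟩ := hM b c
      have hMreal : M b c = ((norm (M b c) : ℝ) : ℂ) := by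
        rw [habs b c]
        rcases hadj with h | h
        · rw [hopp b c h, add_zero, hM5 h hbc_eq]
        · rw [hopp c b h, zero_add, hM6 h hbc_eq]
      have hr' : M b c * x c = M b c * x b := by
        conv_rhs => rw [hMreal]
        exact hr
      have := mul_left_cancel₀ hM' hr'
      rw [ih, this]
  have hcl : ∀ p q : V, σ p = σ q → x p = x q := by
    intro p q hpq
    exact hcl0 (σ p) p q (hclconn (σ p) p q rfl hpq.symm)
  -- representatives
  set z : Fin k → ℂ := fun i => x ((hσ i).choose) with hzdef
  have hzσ : ∀ p, x p = z (σ p) := by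
    intro p
    exact hcl p ((hσ (σ p)).choose) ((hσ (σ p)).choose_spec).symm
  have hzne : ∀ i, z i ≠ 0 := fun i => hxall_pos _
  -- meta edges give phase relation
  have hmeta_edge : ∀ i j : Fin k, Em i j → z j = ω ^ ((j:ℤ) - (i:ℤ)) * z i := by
    intro i j hij
    obtain ⟨a, a', ha, ha', hwa⟩ := hwit i j hij
    obtain ⟨hM1, _, _, _, _, _, _⟩ := hM a a'
    have hne : M a a' ≠ 0 := hMnz _ _ (Or.inl hwa)
    have hr := hrel a a' hne
    have hMe : M a a' = ((w a a' : ℝ) : ℂ) * ω ^ (((i:Fin k):ℤ) - ((j:Fin k):ℤ)) := by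
      rw [hM1 hwa (by rw [ha, ha']; exact hij), ha, ha']
    have habse : norm (M a a') = w a a' := by rw [habs, hopp _ _ hwa, add_zero]
    rw [habse, hMe] at hr
    have hwne : ((w a a' : ℝ) : ℂ) ≠ 0 := by exact_mod_cast ne_of_gt hwa
    have h2 : ω ^ ((i:ℤ) - (j:ℤ)) * x a' = x a := by
      apply mul_left_cancel₀ hwne; linear_combination hr
    have h3 : x a' = ω ^ ((j:ℤ) - (i:ℤ)) * x a := by
      rw [← h2, ← mul_assoc, ← zpow_add₀ hωne,
        show ((j:ℤ) - (i:ℤ)) + ((i:ℤ) - (j:ℤ)) = 0 by ring, zpow_zero, one_mul]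
    rw [hzσ a, ha] at h3
    rw [hzσ a', ha'] at h3
    exact h3
  -- meta constancy
  have hmeta_all : ∀ i j : Fin k, z j = ω ^ ((j:ℤ) - (i:ℤ)) * z i := by
    intro i j
    have h := hmetaconn i j
    induction h with
    | refl => simp
    | @tail b c hib hbc ih =>
      have hstep : z c = ω ^ ((c:ℤ) - (b:ℤ)) * z b := by
        rcases hbc with h | h
        · exact hmeta_edge _ _ h
        · have h1 := hmeta_edge _ _ h
          rw [h1, ← mul_assoc, ← zpow_add₀ hωne,
            show ((c:ℤ) - (b:ℤ)) + ((b:ℤ) - (c:ℤ)) = 0 by ring, zpow_zero, one_mul]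
      rw [hstep, ih, ← mul_assoc, ← zpow_add₀ hωne,
        show ((c:ℤ) - (b:ℤ)) + ((b:ℤ) - (i:ℤ)) = ((c:ℤ) - (i:ℤ)) by ring]
  -- conclusion
  intro u v huv hne
  by_contra hnot
  obtain ⟨_, _, hM3, _, _, _, _⟩ := hM u v
  have hMe := hM3 huv hnot hne
  have hMne : M u v ≠ 0 := hMnz _ _ (Or.inl huv)
  have hr := hrel u v hMne
  have habse : norm (M u v) = w u v := by rw [habs, hopp _ _ huv, add_zero]
  rw [habse, hMe] at hr
  have hzz : z (σ u) = ω ^ (((σ u):ℤ) - ((σ v):ℤ)) * z (σ v) := hmeta_all (σ v) (σ u)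
  rw [hzσ u, hzσ v, hzz] at hr
  have hwne : ((w u v : ℝ) : ℂ) ≠ 0 := by exact_mod_cast ne_of_gt huv
  have hzvne : z (σ v) ≠ 0 := hzne _
  have hωp : ω ^ (((σ u):ℤ) - ((σ v):ℤ)) ≠ 0 := zpow_ne_zero _ hωne
  have hexp1 : Complex.exp ((Real.pi:ℝ) * Complex.I / 3) = 1 := by
    apply mul_right_cancel₀ (mul_ne_zero (mul_ne_zero hwne hωp) hzvne)
    rw [one_mul]
    linear_combination hr
  obtain ⟨n, hn⟩ := Complex.exp_eq_one_iff.mp hexp1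
  have hπne : (Real.pi:ℂ) ≠ 0 := by exact_mod_cast ne_of_gt hπ
  have h6 : (1:ℂ) = 6 * (n:ℂ) := by
    have h7 : (Real.pi:ℂ) * Complex.I * 1 = (Real.pi:ℂ) * Complex.I * (6 * (n:ℂ)) := by
      linear_combination 3 * hn
    exact mul_left_cancel₀ (mul_ne_zero hπne Complex.I_ne_zero) h7
  have h8 : (1:ℤ) = 6 * n := by exact_mod_cast h6
  omega
end

section
/- Let G=(V,E,w) be a simple weighted digraph and 𝒮 = {S_0,…,S_{k−1}} a clustering of G such that every cluster has positive volume. If 𝒮 is a perfect clustering, then δ(𝒮) = 0. Conversely, if δ(𝒮) = 0 and for every pair i ≠ j with at least one edge between S_i and S_j it holds that (i,j) ∈ E^𝒮 or (j,i) ∈ E^𝒮, then 𝒮 is perfect. -/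
/-! `δ(𝒮)` is a sum of nonnegative terms, one for each edge `(u, v)` whose clusters satisfy
`(σ v, σ u) ∈ E^𝒮`, so it vanishes exactly when no edge runs against the meta-graph.
Since the meta-graph is asymmetric (and hence irreflexive), this is what perfectness says
about inter-cluster edges; conversely, an edge between clusters related by the meta-graph in
some direction must then go forward. -/

lemma Fintype.sum_sum_eq_zero_iff_of_nonneg {ι κ : Type*} [Fintype ι] [Fintype κ]
    {f : ι → κ → ℝ} (hf : ∀ i j, 0 ≤ f i j) :
    ∑ i, ∑ j, f i j = 0 ↔ ∀ i j, f i j = 0 := by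
  simp only [Finset.sum_eq_zero_iff_of_nonneg fun i _ => Finset.sum_nonneg fun j _ => hf i j,
    Finset.sum_eq_zero_iff_of_nonneg fun j _ => hf _ j, Finset.mem_univ, true_implies]

section ClusteringValue

variable {V ι : Type*} [Fintype V] [Fintype ι] [DecidableEq ι]

/-- `δ(𝒮)`, with the clustering given by `σ : V → ι` and the meta-graph by `Em`. -/
noncomputable def clusteringValue (w : V → V → ℝ) (σ : V → ι) (Em : ι → ι → Prop)
    [DecidableRel Em] (vol : ι → ℝ) : ℝ :=
  ∑ i, ∑ j, if Em i j then
    (∑ u, ∑ v, if σ u = j ∧ σ v = i ∧ 0 < w u v then w u v / min (vol i) (vol j) else 0)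
  else 0

lemma clusteringValue_eq_zero_iff {w : V → V → ℝ} (hw : ∀ u v, 0 ≤ w u v) (σ : V → ι)
    (Em : ι → ι → Prop) [DecidableRel Em] {vol : ι → ℝ} (hvol : ∀ i, 0 < vol i) :
    clusteringValue w σ Em vol = 0 ↔ ∀ u v, 0 < w u v → ¬Em (σ v) (σ u) := by
  have hterm : ∀ i j u v, 0 ≤ (if σ u = j ∧ σ v = i ∧ 0 < w u v then
      w u v / min (vol i) (vol j) else 0) := fun i j u v => by
    split_ifs
    exacts [div_nonneg (hw u v) (lt_min (hvol i) (hvol j)).le, le_rfl]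
  have hblock : ∀ i j, 0 ≤ (if Em i j then (∑ u, ∑ v, if σ u = j ∧ σ v = i ∧ 0 < w u v then
      w u v / min (vol i) (vol j) else 0) else 0) := fun i j => by
    split_ifs
    exacts [Finset.sum_nonneg fun u _ => Finset.sum_nonneg fun v _ => hterm i j u v, le_rfl]
  rw [clusteringValue, Fintype.sum_sum_eq_zero_iff_of_nonneg hblock]
  constructor
  · intro h u v huv hEm
    have hzero := (Fintype.sum_sum_eq_zero_iff_of_nonneg (hterm (σ v) (σ u))).1
      ((if_pos hEm).symm.trans (h (σ v) (σ u))) u v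
    rw [if_pos ⟨rfl, rfl, huv⟩] at hzero
    exact (div_pos huv (lt_min (hvol _) (hvol _))).ne' hzero
  · intro h i j
    split_ifs with hEm
    · refine (Fintype.sum_sum_eq_zero_iff_of_nonneg (hterm i j)).2 fun u v => if_neg ?_
      rintro ⟨rfl, rfl, huv⟩
      exact h u v huv hEm
    · rfl

end ClusteringValue

theorem stmt_12_general {V : Type*} [Fintype V]
    (w : V → V → ℝ) (hw : ∀ u v, 0 ≤ w u v)
    (k : ℕ)
    (σ : V → Fin k)
    (Em : Fin k → Fin k → Prop) [DecidableRel Em]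
    (hEm : ∀ i j : Fin k, Em i j ↔
      (∑ u, ∑ v, if σ u = j ∧ σ v = i then w u v else 0) <
      (∑ u, ∑ v, if σ u = i ∧ σ v = j then w u v else 0))
    (vol : Fin k → ℝ)
    (hpos : ∀ i, 0 < vol i)
    (δ : ℝ)
    (hδ : δ = ∑ i : Fin k, ∑ j : Fin k, if Em i j then
      (∑ u, ∑ v, if σ u = j ∧ σ v = i ∧ 0 < w u v then
        w u v / min (vol i) (vol j) else 0) else 0) :
    ((∀ u v, 0 < w u v → σ u ≠ σ v → Em (σ u) (σ v)) → δ = 0) ∧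
    (δ = 0 →
      (∀ i j : Fin k, i ≠ j →
        (∃ u v, ((σ u = i ∧ σ v = j) ∨ (σ u = j ∧ σ v = i)) ∧ 0 < w u v) →
        Em i j ∨ Em j i) →
      ∀ u v, 0 < w u v → σ u ≠ σ v → Em (σ u) (σ v)) := by
  have hδ0 : δ = 0 ↔ ∀ u v, 0 < w u v → ¬Em (σ v) (σ u) :=
    hδ ▸ clusteringValue_eq_zero_iff hw σ Em hpos
  have hasymm : ∀ i j, Em i j → ¬Em j i := fun i j hij hji =>
    lt_asymm ((hEm i j).1 hij) ((hEm j i).1 hji)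
  refine ⟨fun hperfect => hδ0.2 fun u v huv hback => ?_, fun hzero hcover u v huv hne => ?_⟩
  · by_cases hsame : σ u = σ v
    · exact hasymm _ _ hback (hsame ▸ hback)
    · exact hasymm _ _ hback (hperfect u v huv hsame)
  · exact (hcover _ _ hne ⟨u, v, .inl ⟨rfl, rfl⟩, huv⟩).resolve_right (hδ0.1 hzero u v huv)

/-- Let `G = (V, E, w)` be a simple weighted digraph and
`𝒮 = {S_0, …, S_{k-1}}` a clustering of `G` (encoded by `σ : V → Fin k` with every
cluster nonempty) such that every cluster has positive volume.  If `𝒮` is a perfect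
clustering, then `δ(𝒮) = 0`.  Conversely, if `δ(𝒮) = 0` and for every pair `i ≠ j` with
at least one edge between `S_i` and `S_j` it holds that `(i,j) ∈ E^𝒮` or `(j,i) ∈ E^𝒮`,
then `𝒮` is perfect. -/
theorem stmt_12 {V : Type*} [Fintype V] [DecidableEq V]
    (w : V → V → ℝ) (hw : ∀ u v, 0 ≤ w u v)
    (hloop : ∀ u, w u u = 0)
    (hsimple : ∀ u v, ¬(0 < w u v ∧ 0 < w v u))
    (k : ℕ) (hk : 2 ≤ k)
    (σ : V → Fin k) (hσ : ∀ i : Fin k, ∃ u, σ u = i)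
    (Em : Fin k → Fin k → Prop) [DecidableRel Em]
    (hEm : ∀ i j : Fin k, Em i j ↔
      (∑ u, ∑ v, if σ u = j ∧ σ v = i then w u v else 0) <
      (∑ u, ∑ v, if σ u = i ∧ σ v = j then w u v else 0))
    (vol : Fin k → ℝ)
    (hvol : ∀ i, vol i = ∑ u, if σ u = i then (∑ v, (w u v + w v u)) else 0)
    (hpos : ∀ i, 0 < vol i)
    (δ : ℝ)
    (hδ : δ = ∑ i : Fin k, ∑ j : Fin k, if Em i j then
      (∑ u, ∑ v, if σ u = j ∧ σ v = i ∧ 0 < w u v then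
        w u v / min (vol i) (vol j) else 0) else 0) :
    ((∀ u v, 0 < w u v → σ u ≠ σ v → Em (σ u) (σ v)) → δ = 0) ∧
    (δ = 0 →
      (∀ i j : Fin k, i ≠ j →
        (∃ u v, ((σ u = i ∧ σ v = j) ∨ (σ u = j ∧ σ v = i)) ∧ 0 < w u v) →
        Em i j ∨ Em j i) →
      ∀ u v, 0 < w u v → σ u ≠ σ v → Em (σ u) (σ v)) :=
  stmt_12_general w hw k σ Em hEm vol hpos δ hδ
end
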